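/- Let S be an inverse semigroup, ρ a left congruence on S, and K = ker(ρ) = { a ∈ S : ∃ e ∈ E(S), a ρ e }. Then InK(ρ) = { a ∈ K : a⁻¹ ∈ K }. That is, a ρ aa⁻¹ holds if and only if both a and a⁻¹ are ρ-related to some idempotents. -/

import Mathlib

class InverseSemigroup (S : Type*) extends Semigroup S where
  inv : S → S
  mul_inv_mul : ∀ a : S, a * inv a * a = a
  inv_mul_inv : ∀ a : S, inv a * a * inv a = inv a
  inv_unique : ∀ a b : S, a * b * a = a → b * a * b = b → b = inv a

open InverseSemigroup

/-- `e` is an idempotent. -/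
def IsIdem {S : Type*} [Mul S] (e : S) : Prop := e * e = e

/-- `r` is a left congruence: an equivalence relation compatible with left multiplication. -/
def IsLeftCongruence {S : Type*} [Semigroup S] (r : S → S → Prop) : Prop :=
  Equivalence r ∧ ∀ a b c : S, r a b → r (c * a) (c * b)

/-- The inverse kernel of a relation: elements related to `a * a⁻¹`. -/
def InK {S : Type*} [InverseSemigroup S] (r : S → S → Prop) : Set S :=
  {a | r a (a * inv a)}

/-- The kernel: elements related to some idempotent. -/
def lker {S : Type*} [InverseSemigroup S] (r : S → S → Prop) : Set S :=
  {a | ∃ e, IsIdem e ∧ r a e}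

/-- `τ` is a congruence on the semilattice of idempotents `E(S)`. -/
def IsECong {S : Type*} [InverseSemigroup S] (τ : S → S → Prop) : Prop :=
  (∀ e f, τ e f → IsIdem e ∧ IsIdem f) ∧
  (∀ e, IsIdem e → τ e e) ∧
  (∀ e f, τ e f → τ f e) ∧
  (∀ e f g, τ e f → τ f g → τ e g) ∧
  (∀ e f g, IsIdem g → τ e f → τ (g * e) (g * f))

/-- The normaliser of a congruence on the idempotents. -/
def normaliser {S : Type*} [InverseSemigroup S] (τ : S → S → Prop) : Set S :=
  {a | ∀ e f, τ e f → τ (a * e * inv a) (a * f * inv a) ∧ τ (inv a * e * a) (inv a * f * a)}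

/-- `T` is a full inverse subsemigroup of `S`. -/
def IsFullInverseSub {S : Type*} [InverseSemigroup S] (T : Set S) : Prop :=
  (∀ e : S, IsIdem e → e ∈ T) ∧ (∀ a b, a ∈ T → b ∈ T → a * b ∈ T) ∧
  (∀ a, a ∈ T → inv a ∈ T)

/-!
Idempotents of an inverse semigroup commute, so `a f a⁻¹` is idempotent and `a f a⁻¹ a = a f`
for every idempotent `f`. If `a ρ e` and `a⁻¹ ρ f` with `e, f` idempotent, multiplying these two
relations on the left by suitable elements gives the chain
`a ρ e a a⁻¹ ρ e a f ρ (a f a⁻¹) e ρ a f ρ a a⁻¹`.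
Conversely, if `a ρ a a⁻¹`, multiplying on the left by `a⁻¹` gives `a⁻¹ a ρ a⁻¹`.
-/

section InverseSemigroup

variable {S : Type*} [InverseSemigroup S]

theorem isIdem_mul_inv (a : S) : IsIdem (a * inv a) := by
  rw [IsIdem, ← mul_assoc, mul_inv_mul]

theorem isIdem_inv_mul (a : S) : IsIdem (inv a * a) := by
  rw [IsIdem, ← mul_assoc, inv_mul_inv]

theorem IsIdem.inv_eq {e : S} (he : IsIdem e) : inv e = e := by
  have hee : e * e * e = e := by rw [he, he]
  exact (inv_unique e e hee hee).symm

theorem IsIdem.mul {e f : S} (he : IsIdem e) (hf : IsIdem f) : IsIdem (e * f) := by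
  have h₁ := mul_inv_mul (e * f)
  have h₂ := inv_mul_inv (e * f)
  generalize hx : inv (e * f) = x at h₁ h₂
  have hinv₁ : e * f * (f * x * e) * (e * f) = e * f :=
    calc e * f * (f * x * e) * (e * f) = e * f * x * (e * f) := by
          simp only [mul_assoc, IsIdempotentElem.mul_self_mul he, IsIdempotentElem.mul_self_mul hf]
      _ = e * f := h₁
  have hinv₂ : f * x * e * (e * f) * (f * x * e) = f * x * e :=
    calc f * x * e * (e * f) * (f * x * e) = f * (x * (e * f) * x) * e := by
          simp only [mul_assoc, IsIdempotentElem.mul_self_mul he, IsIdempotentElem.mul_self_mul hf]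
      _ = f * x * e := by rw [h₂]
  have hfxe : f * x * e = x := (inv_unique _ _ hinv₁ hinv₂).trans hx
  have hx_idem : IsIdem x :=
    calc x * x = f * x * e * (f * x * e) := by rw [hfxe]
      _ = f * (x * (e * f) * x) * e := by simp only [mul_assoc]
      _ = x := by rw [h₂, hfxe]
  -- `e * f` is an inverse of the idempotent `x`, hence equal to it
  rwa [inv_unique x (e * f) h₂ h₁, hx_idem.inv_eq]

theorem IsIdem.commute {e f : S} (he : IsIdem e) (hf : IsIdem f) : Commute e f := by
  have hef := he.mul hf
  have hfe := hf.mul he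
  show e * f = f * e
  refine ((inv_unique _ _ ?_ ?_).trans hef.inv_eq).symm
  · calc e * f * (f * e) * (e * f) = e * f * (e * f) := by
          simp only [mul_assoc, IsIdempotentElem.mul_self_mul he, IsIdempotentElem.mul_self_mul hf]
      _ = e * f := hef
  · calc f * e * (e * f) * (f * e) = f * e * (f * e) := by
          simp only [mul_assoc, IsIdempotentElem.mul_self_mul he, IsIdempotentElem.mul_self_mul hf]
      _ = f * e := hfe

theorem mul_mul_inv_mul_of_isIdem (a : S) {f : S} (hf : IsIdem f) : a * f * inv a * a = a * f :=
  calc a * f * inv a * a = a * (f * (inv a * a)) := by simp only [mul_assoc]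
    _ = a * inv a * a * f := by rw [(hf.commute (isIdem_inv_mul a)).eq, ← mul_assoc, ← mul_assoc]
    _ = a * f := by rw [mul_inv_mul]

theorem isIdem_mul_mul_inv (a : S) {f : S} (hf : IsIdem f) : IsIdem (a * f * inv a) :=
  calc a * f * inv a * (a * f * inv a) = a * f * inv a * a * f * inv a := by simp only [mul_assoc]
    _ = a * f * inv a := by rw [mul_mul_inv_mul_of_isIdem a hf, IsIdempotentElem.mul_mul_self hf]

end InverseSemigroup

namespace IsLeftCongruence

variable {S : Type*} [InverseSemigroup S] {r : S → S → Prop}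

theorem inv_mem_lker_of_mem_inK (hr : IsLeftCongruence r) {a : S} (ha : a ∈ InK r) :
    inv a ∈ lker r := by
  refine ⟨inv a * a, isIdem_inv_mul a, hr.1.symm ?_⟩
  simpa only [← mul_assoc, inv_mul_inv] using hr.2 _ _ (inv a) ha

theorem mem_inK_of_mem_lker (hr : IsLeftCongruence r) {a : S} (ha : a ∈ lker r)
    (ha' : inv a ∈ lker r) : a ∈ InK r := by
  obtain ⟨⟨-, hsymm, htrans⟩, mul_left⟩ := hr
  obtain ⟨e, he, hae⟩ := ha
  obtain ⟨f, hf, haf⟩ := ha'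
  have : Trans r r r := ⟨htrans⟩
  have hconj := isIdem_mul_mul_inv a hf
  calc a = a * inv a * a := (mul_inv_mul a).symm
    r _ (a * inv a * e) := mul_left _ _ _ hae
    _ = e * a * inv a := by rw [((isIdem_mul_inv a).commute he).eq, mul_assoc]
    r _ (e * a * f) := mul_left _ _ _ haf
    _ = e * (a * f * inv a) * a := by
      rw [mul_assoc e (a * f * inv a), mul_mul_inv_mul_of_isIdem a hf, mul_assoc]
    r _ (e * (a * f * inv a) * e) := mul_left _ _ _ hae
    _ = a * f * inv a * e := by rw [(he.commute hconj).eq, mul_assoc, he]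
    r _ (a * f * inv a * a) := hsymm (mul_left _ _ _ hae)
    _ = a * f := mul_mul_inv_mul_of_isIdem a hf
    r _ (a * inv a) := hsymm (mul_left _ _ _ haf)

end IsLeftCongruence

theorem stmt1 {S : Type*} [InverseSemigroup S] (r : S → S → Prop)
    (hr : IsLeftCongruence r) :
    InK r = {a | a ∈ lker r ∧ inv a ∈ lker r} := by
  ext a
  exact ⟨fun ha => ⟨⟨a * inv a, isIdem_mul_inv a, ha⟩, hr.inv_mem_lker_of_mem_inK ha⟩,
    fun ⟨ha, ha'⟩ => hr.mem_inK_of_mem_lker ha ha'⟩
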